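/- Let G be a connected graph on n vertices such that Δ(G) + δ(G) ≥ n. Then Kemeny's constant satisfies K(G) < (2δ(G)/(δ(G) + Δ(G) − n + 1)) · n. In particular K(G) < 2n². -/

import Mathlib

open Finset Classical

/-- The number of spanning trees of a finite simple graph `G`. -/
noncomputable def numSpanningTrees {V : Type*} [Fintype V] (G : SimpleGraph V) : ℕ :=
  Nat.card {T : SimpleGraph V // T ≤ G ∧ T.IsTree}

/-- The number of spanning 2-forests of `G` with `i` and `j` in different components. -/
noncomputable def numSepForests {V : Type*} [Fintype V] (G : SimpleGraph V) (i j : V) : ℕ :=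
  Nat.card {F : SimpleGraph V // F ≤ G ∧ F.IsAcyclic ∧
    Nat.card F.ConnectedComponent = 2 ∧ ¬ F.Reachable i j}

/-- The effective resistance between `i` and `j`: the number of spanning 2-forests separating
`i` and `j` divided by the number of spanning trees. -/
noncomputable def effRes {V : Type*} [Fintype V] (G : SimpleGraph V) (i j : V) : ℝ :=
  (numSepForests G i j : ℝ) / (numSpanningTrees G : ℝ)

/-- Kemeny's constant of a connected graph `G`:
`K(G) = (1/(4m)) ∑_{i,j} d_i r_{i,j} d_j`. -/
noncomputable def kemeny {V : Type*} [Fintype V] (G : SimpleGraph V) : ℝ :=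
  (1 / (4 * (G.edgeFinset.card : ℝ))) *
    ∑ i : V, ∑ j : V, (G.degree i : ℝ) * effRes G i j * (G.degree j : ℝ)
/-!
Fix a vertex `i` of maximum degree `Δ`. The triangle inequality for effective resistance gives
`K(G) ≤ ∑ⱼ dⱼ r(i, j)`. For `j ≠ i` let `Sⱼ` be the set of neighbours of `j` in the closed
neighbourhood `N[i]`. A spanning 2-forest separating `i` from `j`, together with `v ∈ Sⱼ`,
becomes a spanning tree once the edge `iv` (if `v` lies in the component of `j`) or `jv`
(otherwise) is added, and the tree and the choice of side determine `v` and the forest; hence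
`|Sⱼ| r(i, j) ≤ 2`. As `N[i]` has `Δ + 1` vertices,
`|Sⱼ| ≥ dⱼ - (n - 1 - Δ) ≥ δ + Δ - n + 1`, so `dⱼ r(i, j) ≤ 2δ / (δ + Δ - n + 1)`,
while the term `j = i` vanishes.
-/
namespace SimpleGraph

variable {V : Type*}

lemma reachable_or_reachable_of_card_connectedComponent_eq_two {F : SimpleGraph V} {a b : V}
    (h2 : Nat.card F.ConnectedComponent = 2) (hab : ¬F.Reachable a b) (v : V) :
    F.Reachable v a ∨ F.Reachable v b := by
  obtain ⟨c, -, hc⟩ := (Nat.card_eq_two_iff' (F.connectedComponentMk a)).1 h2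
  by_contra! hv
  have hb : F.connectedComponentMk b = c := hc _ fun h ↦ hab (ConnectedComponent.exact h).symm
  have hv' : F.connectedComponentMk v = c := hc _ fun h ↦ hv.1 (ConnectedComponent.exact h)
  exact hv.2 (ConnectedComponent.exact (hv'.trans hb.symm))

lemma sup_edge_deleteEdges {F : SimpleGraph V} {a x : V} (h : ¬F.Adj a x) :
    (F ⊔ edge a x).deleteEdges {s(a, x)} = F :=
  sup_sdiff_right_self.trans (sdiff_edge _ h)

lemma isTree_sup_edge {F : SimpleGraph V} {a b x : V} (hF : F.IsAcyclic)
    (h2 : Nat.card F.ConnectedComponent = 2) (hab : ¬F.Reachable a b) (hx : F.Reachable x b) :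
    (F ⊔ edge a x).IsTree := by
  have hax : ¬F.Reachable a x := fun h ↦ hab (h.trans hx)
  have hne : a ≠ x := by rintro rfl; exact hax .rfl
  refine ⟨(connected_iff_exists_forall_reachable _).2 ⟨a, fun u ↦ ?_⟩,
    hF.sup_edge_of_not_reachable hax⟩
  have hedge : (F ⊔ edge a x).Reachable a x := Adj.reachable (by simp [edge_adj, hne])
  rcases reachable_or_reachable_of_card_connectedComponent_eq_two h2 hab u with hu | hu
  · exact (hu.mono le_sup_left).symm
  · exact hedge.trans ((hx.trans hu.symm).mono le_sup_left)

lemma eq_of_not_reachable_deleteEdges {T : SimpleGraph V} {a b x₁ x₂ : V} (hab : T.Reachable a b)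
    (h₁ : ¬(T.deleteEdges {s(a, x₁)}).Reachable a b)
    (h₂ : ¬(T.deleteEdges {s(a, x₂)}).Reachable a b) : x₁ = x₂ := by
  obtain ⟨p, hp⟩ := hab.exists_isPath
  rw [hp.eq_snd_of_mem_edges (p.mem_edges_of_not_reachable_deleteEdges h₁),
    hp.eq_snd_of_mem_edges (p.mem_edges_of_not_reachable_deleteEdges h₂)]

lemma eq_and_eq_of_sup_edge_eq {F₁ F₂ : SimpleGraph V} {a b x₁ x₂ : V}
    (heq : F₁ ⊔ edge a x₁ = F₂ ⊔ edge a x₂) (h₁ : ¬F₁.Reachable a b) (h₂ : ¬F₂.Reachable a b)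
    (hx₁ : F₁.Reachable x₁ b) (hx₂ : F₂.Reachable x₂ b) : x₁ = x₂ ∧ F₁ = F₂ := by
  have hdel₁ := sup_edge_deleteEdges fun h ↦ h₁ (h.reachable.trans hx₁)
  have hdel₂ := sup_edge_deleteEdges fun h ↦ h₂ (h.reachable.trans hx₂)
  have hne : a ≠ x₁ := by rintro rfl; exact h₁ hx₁
  have hab : (F₁ ⊔ edge a x₁).Reachable a b :=
    (Adj.reachable (by simp [edge_adj, hne])).trans (hx₁.mono le_sup_left)
  obtain rfl : x₁ = x₂ := by
    refine eq_of_not_reachable_deleteEdges hab ?_ ?_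
    · rwa [hdel₁]
    · rwa [heq, hdel₂]
  exact ⟨rfl, hdel₁.symm.trans (heq ▸ hdel₂)⟩

def IsSepForest (G : SimpleGraph V) (i j : V) (F : SimpleGraph V) : Prop :=
  F ≤ G ∧ F.IsAcyclic ∧ Nat.card F.ConnectedComponent = 2 ∧ ¬F.Reachable i j

lemma IsSepForest.symm {G F : SimpleGraph V} {i j : V} (hF : G.IsSepForest i j F) :
    G.IsSepForest j i F :=
  ⟨hF.1, hF.2.1, hF.2.2.1, fun h ↦ hF.2.2.2 h.symm⟩

def bridgingPairs (G : SimpleGraph V) (a b : V) : Set (V × SimpleGraph V) :=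
  {p | G.Adj a p.1 ∧ G.IsSepForest a b p.2 ∧ p.2.Reachable p.1 b}

end SimpleGraph

section

open SimpleGraph

variable {V : Type*} [Fintype V]

lemma numSepForests_eq_ncard (G : SimpleGraph V) (i j : V) :
    numSepForests G i j = {F | G.IsSepForest i j F}.ncard :=
  (Nat.card_coe_set_eq _)

lemma numSpanningTrees_eq_ncard (G : SimpleGraph V) :
    numSpanningTrees G = {T | T ≤ G ∧ T.IsTree}.ncard :=
  (Nat.card_coe_set_eq _)

lemma numSepForests_self (G : SimpleGraph V) (i : V) : numSepForests G i i = 0 := by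
  simp [numSepForests_eq_ncard, IsSepForest]

lemma numSepForests_comm (G : SimpleGraph V) (i j : V) :
    numSepForests G i j = numSepForests G j i := by
  simp only [numSepForests_eq_ncard, IsSepForest, reachable_comm]

lemma numSepForests_le_add (G : SimpleGraph V) (a b i : V) :
    numSepForests G a b ≤ numSepForests G a i + numSepForests G i b := by
  simp only [numSepForests_eq_ncard]
  refine (Set.ncard_le_ncard ?_ (Set.toFinite _)).trans (Set.ncard_union_le _ _)
  rintro F ⟨hle, hac, h2, hab⟩
  by_cases hai : F.Reachable a i
  · exact Or.inr ⟨hle, hac, h2, fun hib ↦ hab (hai.trans hib)⟩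
  · exact Or.inl ⟨hle, hac, h2, hai⟩

lemma ncard_bridgingPairs_le (G : SimpleGraph V) (a b : V) :
    (G.bridgingPairs a b).ncard ≤ numSpanningTrees G := by
  rw [numSpanningTrees_eq_ncard]
  refine Set.ncard_le_ncard_of_injOn (fun p ↦ p.2 ⊔ edge a p.1) ?_ ?_ (Set.toFinite _)
  · rintro ⟨x, F⟩ ⟨hax, ⟨hle, hac, h2, hab⟩, hx⟩
    exact ⟨sup_le hle ((edge_le_iff _).2 (Or.inr hax)), isTree_sup_edge hac h2 hab hx⟩
  · rintro ⟨x₁, F₁⟩ ⟨-, hF₁, hx₁⟩ ⟨x₂, F₂⟩ ⟨-, hF₂, hx₂⟩ heq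
    obtain ⟨rfl, rfl⟩ := eq_and_eq_of_sup_edge_eq heq hF₁.2.2.2 hF₂.2.2.2 hx₁ hx₂
    rfl

lemma card_mul_numSepForests_le (G : SimpleGraph V) (i j : V) :
    #(G.neighborFinset j ∩ insert i (G.neighborFinset i)) * numSepForests G i j ≤
      2 * numSpanningTrees G := by
  rw [numSepForests_eq_ncard, ← Set.ncard_coe_finset, ← Set.ncard_prod, two_mul]
  refine (Set.ncard_le_ncard ?_ (Set.toFinite _)).trans <| (Set.ncard_union_le _ _).trans <|
    add_le_add (ncard_bridgingPairs_le G i j) (ncard_bridgingPairs_le G j i)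
  rintro ⟨v, F⟩ ⟨hv, hF⟩
  simp only [coe_inter, coe_insert, Set.mem_inter_iff, Set.mem_insert_iff, mem_coe,
    mem_neighborFinset] at hv
  -- `(v, F)` is bridged through `iv` if `v` lies on the side of `j`, and through `jv` otherwise.
  by_cases h : F.Reachable v j ∧ v ≠ i
  · exact Or.inl ⟨hv.2.resolve_left h.2, hF, h.1⟩
  · refine Or.inr ⟨hv.1, hF.symm, ?_⟩
    rcases eq_or_ne v i with rfl | hvi
    · rfl
    · refine (reachable_or_reachable_of_card_connectedComponent_eq_two hF.2.2.1 hF.2.2.2 v)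
        |>.resolve_right fun hvj ↦ h ⟨hvj, hvi⟩

lemma effRes_nonneg (G : SimpleGraph V) (i j : V) : 0 ≤ effRes G i j := by
  unfold effRes; positivity

lemma effRes_self (G : SimpleGraph V) (i : V) : effRes G i i = 0 := by
  simp [effRes, numSepForests_self]

lemma effRes_comm (G : SimpleGraph V) (i j : V) : effRes G i j = effRes G j i := by
  rw [effRes, effRes, numSepForests_comm]

lemma effRes_le_add (G : SimpleGraph V) (a b i : V) :
    effRes G a b ≤ effRes G a i + effRes G i b := by
  simp only [effRes, ← add_div]
  gcongr
  exact_mod_cast numSepForests_le_add G a b i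

lemma card_mul_effRes_le_two (G : SimpleGraph V) (i j : V) :
    (#(G.neighborFinset j ∩ insert i (G.neighborFinset i)) : ℝ) * effRes G i j ≤ 2 := by
  rw [effRes, ← mul_div_assoc]
  exact div_le_of_le_mul₀ (Nat.cast_nonneg _) zero_le_two
    (by exact_mod_cast card_mul_numSepForests_le G i j)

lemma kemeny_le_sum_degree_mul_effRes (G : SimpleGraph V) (i : V) :
    kemeny G ≤ ∑ j, (G.degree j : ℝ) * effRes G i j := by
  set R := ∑ j, (G.degree j : ℝ) * effRes G i j
  have hR : 0 ≤ R := sum_nonneg fun j _ ↦ mul_nonneg (Nat.cast_nonneg _) (effRes_nonneg G i j)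
  have hdeg : ∑ j, (G.degree j : ℝ) = 2 * #G.edgeFinset := by
    exact_mod_cast G.sum_degrees_eq_twice_card_edges
  have hsum : ∑ a, ∑ b, (G.degree a : ℝ) * effRes G a b * G.degree b ≤
      4 * #G.edgeFinset * R := calc
    _ ≤ ∑ a, ∑ b, (G.degree a : ℝ) * (effRes G a i + effRes G i b) * G.degree b := by
      gcongr with a _ b _
      exact effRes_le_add G a b i
    _ = R * ∑ b, (G.degree b : ℝ) + (∑ a, (G.degree a : ℝ)) * R := by
      simp only [R, sum_mul_sum, ← sum_add_distrib]
      refine sum_congr rfl fun a _ ↦ sum_congr rfl fun b _ ↦ ?_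
      rw [effRes_comm G a i]
      ring
    _ = 4 * #G.edgeFinset * R := by rw [hdeg]; ring
  rw [kemeny, one_div_mul_eq_div]
  exact div_le_of_le_mul₀ (by positivity) hR (by linarith)

lemma degree_add_degree_add_one_le (G : SimpleGraph V) (i j : V) :
    G.degree j + G.degree i + 1 ≤
      Fintype.card V + #(G.neighborFinset j ∩ insert i (G.neighborFinset i)) := by
  have hunion := card_union_add_card_inter (G.neighborFinset j) (insert i (G.neighborFinset i))
  rw [card_insert_of_notMem (G.notMem_neighborFinset_self i), card_neighborFinset_eq_degree,
    card_neighborFinset_eq_degree] at hunion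
  have := card_le_univ (G.neighborFinset j ∪ insert i (G.neighborFinset i))
  omega

lemma degree_mul_effRes_le (G : SimpleGraph V) {i : V} (hi : G.maxDegree = G.degree i)
    (hs : 0 < (G.minDegree : ℝ) + G.maxDegree - Fintype.card V + 1) (j : V) :
    (G.degree j : ℝ) * effRes G i j ≤
      2 * G.minDegree / ((G.minDegree : ℝ) + G.maxDegree - Fintype.card V + 1) := by
  have hcount : (G.degree j : ℝ) + G.maxDegree + 1 ≤
      Fintype.card V + #(G.neighborFinset j ∩ insert i (G.neighborFinset i)) := by
    exact_mod_cast hi ▸ degree_add_degree_add_one_le G i j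
  set S : ℝ := ((#(G.neighborFinset j ∩ insert i (G.neighborFinset i)) : ℕ) : ℝ)
  have hδ : (G.minDegree : ℝ) ≤ G.degree j := by exact_mod_cast G.minDegree_le_degree j
  have hΔ : (G.maxDegree : ℝ) + 1 ≤ Fintype.card V := by
    exact_mod_cast hi ▸ G.degree_lt_card_verts i
  have key : (G.degree j : ℝ) * (G.minDegree + G.maxDegree - Fintype.card V + 1) ≤
      G.minDegree * S := by
    nlinarith [mul_le_mul_of_nonneg_left hcount (Nat.cast_nonneg G.minDegree : (0 : ℝ) ≤ _),
      mul_nonneg (sub_nonneg.2 hδ) (sub_nonneg.2 hΔ)]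
  have hr := effRes_nonneg G i j
  have hSr := card_mul_effRes_le_two G i j
  rw [le_div_iff₀ hs]
  calc (G.degree j : ℝ) * effRes G i j * (G.minDegree + G.maxDegree - Fintype.card V + 1)
      = effRes G i j * (G.degree j * (G.minDegree + G.maxDegree - Fintype.card V + 1)) := by
        ring
    _ ≤ effRes G i j * (G.minDegree * S) := by gcongr
    _ = G.minDegree * (S * effRes G i j) := by ring
    _ ≤ G.minDegree * 2 := by gcongr
    _ = 2 * G.minDegree := by ring

end

theorem kemeny_lt_of_maxDegree_add_minDegree_general {V : Type*} [Fintype V] [Nonempty V]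
    (G : SimpleGraph V)
    (h : Fintype.card V ≤ G.maxDegree + G.minDegree) :
    kemeny G <
      (2 * (G.minDegree : ℝ) /
        ((G.minDegree : ℝ) + (G.maxDegree : ℝ) - (Fintype.card V : ℝ) + 1)) *
        (Fintype.card V : ℝ) ∧
    kemeny G < 2 * (Fintype.card V : ℝ) ^ 2 := by
  obtain ⟨i, hi⟩ := G.exists_maximal_degree_vertex
  have hΔ : G.maxDegree < Fintype.card V := hi ▸ G.degree_lt_card_verts i
  have hδ : (0 : ℝ) < G.minDegree := by exact_mod_cast (by omega : 0 < G.minDegree)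
  have hδn : (G.minDegree : ℝ) ≤ Fintype.card V := by
    exact_mod_cast ((G.minDegree_le_degree i).trans (G.degree_lt_card_verts i).le)
  have hs : (1 : ℝ) ≤ G.minDegree + G.maxDegree - Fintype.card V + 1 := by
    have : (Fintype.card V : ℝ) ≤ G.maxDegree + G.minDegree := by exact_mod_cast h
    linarith
  set q := 2 * (G.minDegree : ℝ) / (G.minDegree + G.maxDegree - Fintype.card V + 1)
  have hK : kemeny G < q * Fintype.card V := calc
    kemeny G ≤ ∑ j, (G.degree j : ℝ) * effRes G i j := kemeny_le_sum_degree_mul_effRes G i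
    _ < ∑ _j : V, q :=
      sum_lt_sum (fun j _ ↦ degree_mul_effRes_le G hi (by linarith) j)
        ⟨i, mem_univ i, by rw [effRes_self, mul_zero]; positivity⟩
    _ = q * Fintype.card V := by rw [sum_const, card_univ, nsmul_eq_mul, mul_comm]
  refine ⟨hK, hK.trans_le ?_⟩
  calc q * Fintype.card V ≤ 2 * G.minDegree * Fintype.card V := by
        gcongr; exact div_le_self (by positivity) hs
    _ ≤ 2 * (Fintype.card V : ℝ) ^ 2 := by nlinarith

/-- If `G` is connected on `n` vertices and `Δ(G) + δ(G) ≥ n`, then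
`K(G) < (2δ(G)/(δ(G) + Δ(G) − n + 1))·n`; in particular `K(G) < 2n²`. -/
theorem kemeny_lt_of_maxDegree_add_minDegree {V : Type*} [Fintype V] [Nonempty V]
    (G : SimpleGraph V) (hG : G.Connected)
    (h : Fintype.card V ≤ G.maxDegree + G.minDegree) :
    kemeny G <
      (2 * (G.minDegree : ℝ) /
        ((G.minDegree : ℝ) + (G.maxDegree : ℝ) - (Fintype.card V : ℝ) + 1)) *
        (Fintype.card V : ℝ) ∧
    kemeny G < 2 * (Fintype.card V : ℝ) ^ 2 :=
  kemeny_lt_of_maxDegree_add_minDegree_general G h
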